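/- arXiv:2103.01932 — 4 statements merged into one kernel-verified Lean document; each statement's English description precedes it below -/
import Mathlib

section
/- Let P̄(t) = G(t)⁻¹ where G(t) = ∫₀ᵗ exp(−λ(t−r)) W(r)ᵀ W(r) dr + γ·I. Then t ↦ P̄(t) is differentiable on (0, ∞) and satisfies the matrix differential equation P̄′(t) = (λ·I − λγ·P̄(t) − P̄(t)·W(t)ᵀW(t))·P̄(t). -/
open scoped Matrix
open MeasureTheory

section AuxLinfty

attribute [local instance] Matrix.linftyOpNormedRing Matrix.linftyOpNormedAlgebra

/-- Entry evaluation as a continuous linear map (linfty instance). -/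
noncomputable def entryCLM (m : ℕ) (i j : Fin m) : Matrix (Fin m) (Fin m) ℝ →L[ℝ] ℝ :=
  LinearMap.toContinuousLinearMap
    { toFun := fun A => A i j
      map_add' := fun _ _ => rfl
      map_smul' := fun _ _ => rfl }

@[simp] lemma entryCLM_apply (m : ℕ) (i j : Fin m) (A : Matrix (Fin m) (Fin m) ℝ) :
    entryCLM m i j A = A i j := rfl

/-- Quadratic form evaluation as a continuous linear map (linfty instance). -/
noncomputable def qfCLM (m : ℕ) (x : Fin m → ℝ) : Matrix (Fin m) (Fin m) ℝ →L[ℝ] ℝ :=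
  LinearMap.toContinuousLinearMap
    { toFun := fun A => x ⬝ᵥ (A *ᵥ x)
      map_add' := fun A B => by simp [Matrix.add_mulVec, dotProduct_add]
      map_smul' := fun c A => by simp [Matrix.smul_mulVec, dotProduct_smul] }

@[simp] lemma qfCLM_apply (m : ℕ) (x : Fin m → ℝ) (A : Matrix (Fin m) (Fin m) ℝ) :
    qfCLM m x A = x ⬝ᵥ (A *ᵥ x) := rfl

lemma integral_posSemidef {m : ℕ} {f : ℝ → Matrix (Fin m) (Fin m) ℝ}
    (hf : Continuous f) (h : ∀ r, (f r).PosSemidef) {t : ℝ} (ht : 0 ≤ t) :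
    (∫ r in (0:ℝ)..t, f r).PosSemidef := by
  have hint := hf.intervalIntegrable (μ := MeasureTheory.volume) 0 t
  refine Matrix.PosSemidef.of_dotProduct_mulVec_nonneg ?_ ?_
  · have hent : ∀ i j, (∫ r in (0:ℝ)..t, f r) i j = ∫ r in (0:ℝ)..t, f r i j := by
      intro i j
      exact ((entryCLM m i j).intervalIntegral_comp_comm hint).symm
    ext i j
    simp only [Matrix.conjTranspose_apply, hent, star_trivial]
    congr 1
    ext r
    exact ((h r).1.apply j i).symm.trans (by simp)
  · intro x
    have hq : x ⬝ᵥ ((∫ r in (0:ℝ)..t, f r) *ᵥ x) = ∫ r in (0:ℝ)..t, x ⬝ᵥ (f r *ᵥ x) := by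
      exact ((qfCLM m x).intervalIntegral_comp_comm hint).symm
    have : (0:ℝ) ≤ ∫ r in (0:ℝ)..t, x ⬝ᵥ (f r *ᵥ x) := by
      apply intervalIntegral.integral_nonneg ht
      intro u _
      simpa using (h u).dotProduct_mulVec_nonneg x
    simpa [star_trivial, hq] using this

lemma posSemidef_smul {m : ℕ} {A : Matrix (Fin m) (Fin m) ℝ} (hA : A.PosSemidef)
    {c : ℝ} (hc : 0 ≤ c) : (c • A).PosSemidef := by
  refine Matrix.PosSemidef.of_dotProduct_mulVec_nonneg ?_ ?_
  · ext i j
    simp only [Matrix.conjTranspose_apply, Matrix.smul_apply, star_trivial, smul_eq_mul]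
    rw [show A j i = A i j from by simpa using hA.1.apply i j]
  · intro x
    have := hA.dotProduct_mulVec_nonneg x
    simp only [Matrix.smul_mulVec, dotProduct_smul, smul_eq_mul] at *
    exact mul_nonneg hc this

theorem aux_deriv (n m : ℕ) (lam gam : ℝ) (hlam : 0 < lam) (hgam : 0 < gam)
    (W : ℝ → Matrix (Fin n) (Fin m) ℝ) (hW : Continuous W)
    (G : ℝ → Matrix (Fin m) (Fin m) ℝ)
    (hG : ∀ (s : ℝ) (i j : Fin m), G s i j =
      (∫ r in (0:ℝ)..s, Real.exp (-lam * (s - r)) * (((W r)ᵀ * W r) i j))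
        + gam * (1 : Matrix (Fin m) (Fin m) ℝ) i j)
    (P : ℝ → Matrix (Fin m) (Fin m) ℝ) (hP : ∀ s : ℝ, P s = (G s)⁻¹)
    (t : ℝ) (ht : 0 < t) (i j : Fin m) :
    HasDerivAt (fun s => P s i j)
      (((lam • (1 : Matrix (Fin m) (Fin m) ℝ) - (lam * gam) • P t - P t * ((W t)ᵀ * W t)) * P t) i j)
      t := by
  classical
  set F : ℝ → Matrix (Fin m) (Fin m) ℝ := fun r => (W r)ᵀ * W r with hFdef
  have hFcont : Continuous F := hW.matrix_transpose.matrix_mul hW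
  have hFps : ∀ r, (F r).PosSemidef := fun r =>
    Matrix.posSemidef_conjTranspose_mul_self (W r)
  -- the auxiliary integral H
  set H : ℝ → Matrix (Fin m) (Fin m) ℝ :=
    fun s => ∫ r in (0:ℝ)..s, Real.exp (lam * r) • F r with hHdef
  have hHcont : Continuous fun r => Real.exp (lam * r) • F r :=
    (Real.continuous_exp.comp (continuous_const.mul continuous_id)).smul hFcont
  -- rewrite G in terms of H
  have hGH : ∀ s, G s = Real.exp (-lam * s) • H s + gam • (1 : Matrix (Fin m) (Fin m) ℝ) := by
    intro s
    have hint := hHcont.intervalIntegrable (μ := MeasureTheory.volume) 0 s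
    ext i j
    have hH : H s i j = ∫ r in (0:ℝ)..s, Real.exp (lam * r) * F r i j := by
      exact ((entryCLM m i j).intervalIntegral_comp_comm hint).symm
    simp only [Matrix.add_apply, Matrix.smul_apply, smul_eq_mul, hG s i j, hH]
    congr 1
    rw [← intervalIntegral.integral_const_mul]
    refine intervalIntegral.integral_congr fun r _ => ?_
    rw [← mul_assoc, ← Real.exp_add]
    have harg : -lam * s + lam * r = -lam * (s - r) := by ring
    rw [harg]
  -- derivative of H
  have hHd : HasDerivAt H (Real.exp (lam * t) • F t) t :=
    (hHcont.integral_hasStrictDerivAt 0 t).hasDerivAt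
  -- derivative of the scalar factor
  have hexp : HasDerivAt (fun s => Real.exp (-lam * s)) (-lam * Real.exp (-lam * t)) t := by
    have h1 : HasDerivAt (fun s : ℝ => -lam * s) (-lam) t := by
      simpa using (hasDerivAt_id t).const_mul (-lam)
    simpa [mul_comm] using h1.exp
  -- derivative of G
  have hfun : G = fun s => Real.exp (-lam * s) • H s + gam • (1 : Matrix (Fin m) (Fin m) ℝ) :=
    funext hGH
  have hGd0 : HasDerivAt G
      (Real.exp (-lam * t) • Real.exp (lam * t) • F t + (-lam * Real.exp (-lam * t)) • H t) t := by
    rw [hfun]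
    exact (hexp.smul hHd).add_const _
  have hGd : HasDerivAt G (F t - lam • G t + (lam * gam) • (1 : Matrix (Fin m) (Fin m) ℝ)) t := by
    convert hGd0 using 1
    rw [hGH t]
    simp only [smul_smul, ← Real.exp_add]
    rw [show -lam * t + lam * t = 0 by ring, Real.exp_zero]
    module
  -- positive definiteness / invertibility of G t
  have hHps : (H t).PosSemidef :=
    integral_posSemidef hHcont (fun r => posSemidef_smul (hFps r) (Real.exp_nonneg _)) ht.le
  have hGpd : (G t).PosDef := by
    rw [hGH t]
    refine Matrix.PosDef.posSemidef_add (posSemidef_smul hHps (Real.exp_nonneg _)) ?_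
    rw [Matrix.smul_one_eq_diagonal]
    exact Matrix.posDef_diagonal_iff.mpr fun _ => hgam
  have hU : IsUnit (G t) := hGpd.isUnit
  have hdet : IsUnit (G t).det := (Matrix.isUnit_iff_isUnit_det _).mp hU
  have hPG : P t * G t = 1 := by rw [hP]; exact Matrix.nonsing_inv_mul _ hdet
  have hGP : G t * P t = 1 := by rw [hP]; exact Matrix.mul_nonsing_inv _ hdet
  -- derivative of P = Ring.inverse ∘ G
  have h1 : HasFDerivAt Ring.inverse
      (-(ContinuousLinearMap.mulLeftRight ℝ _ ↑hU.unit⁻¹ ↑hU.unit⁻¹)) (G t) := by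
    have := hasFDerivAt_ringInverse (𝕜 := ℝ) hU.unit
    rwa [hU.unit_spec] at this
  have hru : (↑hU.unit⁻¹ : Matrix (Fin m) (Fin m) ℝ) = P t := by
    rw [Matrix.coe_units_inv, hU.unit_spec, ← hP]
  have hD : HasDerivAt (fun s => Ring.inverse (G s))
      (-(P t * (F t - lam • G t + (lam * gam) • (1 : Matrix (Fin m) (Fin m) ℝ)) * P t)) t := by
    have := h1.comp_hasDerivAt t hGd
    rw [hru] at this; exact this
  have hPfun : P = fun s => Ring.inverse (G s) := by
    funext s
    rw [hP s, Matrix.nonsing_inv_eq_ringInverse]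
  have hPd : HasDerivAt P
      ((lam • (1 : Matrix (Fin m) (Fin m) ℝ) - (lam * gam) • P t - P t * F t) * P t) t := by
    have e1 : P t * (lam • G t) * P t = lam • P t := by
      rw [mul_smul_comm, smul_mul_assoc, mul_assoc, hGP, mul_one]
    have e2 : P t * ((lam * gam) • (1 : Matrix (Fin m) (Fin m) ℝ)) * P t
        = (lam * gam) • (P t * P t) := by
      rw [mul_smul_comm, mul_one, smul_mul_assoc]
    have key : -(P t * (F t - lam • G t + (lam * gam) • (1 : Matrix (Fin m) (Fin m) ℝ)) * P t)
        = (lam • (1 : Matrix (Fin m) (Fin m) ℝ) - (lam * gam) • P t - P t * F t) * P t := by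
      calc -(P t * (F t - lam • G t + (lam * gam) • (1 : Matrix (Fin m) (Fin m) ℝ)) * P t)
          = -(P t * F t * P t - P t * (lam • G t) * P t
              + P t * ((lam * gam) • (1 : Matrix (Fin m) (Fin m) ℝ)) * P t) := by
            rw [mul_add, add_mul, mul_sub, sub_mul]
        _ = -(P t * F t * P t - lam • P t + (lam * gam) • (P t * P t)) := by rw [e1, e2]
        _ = (lam • (1 : Matrix (Fin m) (Fin m) ℝ) - (lam * gam) • P t - P t * F t) * P t := by
            rw [sub_mul, sub_mul, smul_mul_assoc, one_mul, smul_mul_assoc]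
            abel
    have hD' : HasDerivAt (fun s => Ring.inverse (G s))
        ((lam • (1 : Matrix (Fin m) (Fin m) ℝ) - (lam * gam) • P t - P t * F t) * P t) t := by
      rw [← key]; exact hD
    exact hD'.congr_of_eventuallyEq (Filter.Eventually.of_forall fun s => by rw [hPfun])
  exact (entryCLM m i j).hasFDerivAt.comp_hasDerivAt t hPd

end AuxLinfty

attribute [local instance] Matrix.normedAddCommGroup Matrix.normedSpace

/-- Entry evaluation as a continuous linear map (entrywise sup-norm instance). -/
noncomputable def entryCLMsup (m : ℕ) (i j : Fin m) : Matrix (Fin m) (Fin m) ℝ →L[ℝ] ℝ :=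
  LinearMap.toContinuousLinearMap
    { toFun := fun A => A i j
      map_add' := fun _ _ => rfl
      map_smul' := fun _ _ => rfl }

@[simp] lemma entryCLMsup_apply (m : ℕ) (i j : Fin m) (A : Matrix (Fin m) (Fin m) ℝ) :
    entryCLMsup m i j A = A i j := rfl

/-- With `P̄ t = (G t)⁻¹` and
`G t = ∫₀ᵗ exp (-λ(t-r)) (W r)ᵀ (W r) dr + γ • 1`, the map `t ↦ P̄ t` is differentiable on
`(0, ∞)` and satisfies `P̄' t = (λ • 1 - λγ • P̄ t - P̄ t * (W t)ᵀ (W t)) * P̄ t`. -/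
theorem stmt_5 (n m : ℕ) (lam gam : ℝ) (hlam : 0 < lam) (hgam : 0 < gam)
    (W : ℝ → Matrix (Fin n) (Fin m) ℝ) (hW : Continuous W)
    (G : ℝ → Matrix (Fin m) (Fin m) ℝ)
    (hG : ∀ t : ℝ, G t =
      (∫ r in (0:ℝ)..t, Real.exp (-lam * (t - r)) • ((W r)ᵀ * W r))
        + gam • (1 : Matrix (Fin m) (Fin m) ℝ))
    (P : ℝ → Matrix (Fin m) (Fin m) ℝ) (hP : ∀ t : ℝ, P t = (G t)⁻¹) :
    ∀ t : ℝ, 0 < t →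
      HasDerivAt P
        ((lam • (1 : Matrix (Fin m) (Fin m) ℝ) - (lam * gam) • P t - P t * ((W t)ᵀ * W t)) * P t)
        t := by
  intro t ht
  have hFcont : Continuous fun r => (W r)ᵀ * W r := hW.matrix_transpose.matrix_mul hW
  have hGe : ∀ (s : ℝ) (i j : Fin m), G s i j =
      (∫ r in (0:ℝ)..s, Real.exp (-lam * (s - r)) * (((W r)ᵀ * W r) i j))
        + gam * (1 : Matrix (Fin m) (Fin m) ℝ) i j := by
    intro s i j
    have hint := Continuous.intervalIntegrable (μ := MeasureTheory.volume)
        (u := fun r => Real.exp (-lam * (s - r)) • ((W r)ᵀ * W r))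
        ((Real.continuous_exp.comp (by continuity)).smul hFcont) 0 s
    have hent : (∫ r in (0:ℝ)..s, Real.exp (-lam * (s - r)) • ((W r)ᵀ * W r)) i j
        = ∫ r in (0:ℝ)..s, Real.exp (-lam * (s - r)) * ((W r)ᵀ * W r) i j := by
      exact ((entryCLMsup m i j).intervalIntegral_comp_comm hint).symm
    rw [hG s]
    simp only [Matrix.add_apply, Matrix.smul_apply, smul_eq_mul, hent]
  have key := aux_deriv n m lam gam hlam hgam W hW G hGe P hP t ht
  exact hasDerivAt_pi.mpr fun i => hasDerivAt_pi.mpr fun j => key i j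
end

section
/- Let â*(t) = P̄(t)·b(t) with P̄(t) = G(t)⁻¹, G(t) = ∫₀ᵗ exp(−λ(t−r)) W(r)ᵀ W(r) dr + γ·I, and b(t) = ∫₀ᵗ exp(−λ(t−r)) W(r)ᵀ y₁(r) dr, and define the filtered prediction error e₁(t) = W(t) â*(t) − y₁(t). Then for t > 0 the map t ↦ â*(t) is differentiable and satisfies the prediction-error adaptation law with regularization: (â*)′(t) = −P̄(t)·(W(t)ᵀ e₁(t) + λγ·â*(t)). -/
open scoped Matrix
open MeasureTheory

attribute [local instance] Matrix.normedAddCommGroup Matrix.normedSpace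

/-- Matrix-vector multiplication viewed as a map between Euclidean spaces. -/
noncomputable def mv {n m : ℕ} (A : Matrix (Fin n) (Fin m) ℝ)
    (x : EuclideanSpace ℝ (Fin m)) : EuclideanSpace ℝ (Fin n) :=
  WithLp.toLp 2 (A.mulVec x)

section Aux

variable {E : Type*} [NormedAddCommGroup E] [NormedSpace ℝ E] [CompleteSpace E]

lemma hasDerivAt_exp_kernel (lam : ℝ) {f : ℝ → E} (hf : Continuous f) (t : ℝ) :
    HasDerivAt (fun u => ∫ r in (0:ℝ)..u, Real.exp (-lam * (u - r)) • f r)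
      (f t - lam • ∫ r in (0:ℝ)..t, Real.exp (-lam * (t - r)) • f r) t := by
  have hg : Continuous fun r => Real.exp (lam * r) • f r :=
    (Real.continuous_exp.comp (continuous_const.mul continuous_id)).smul hf
  set g : ℝ → E := fun u => ∫ r in (0:ℝ)..u, Real.exp (lam * r) • f r with hgdef
  have key : ∀ u : ℝ, (∫ r in (0:ℝ)..u, Real.exp (-lam * (u - r)) • f r)
      = Real.exp (-lam * u) • g u := by
    intro u
    rw [hgdef, ← intervalIntegral.integral_smul]
    congr 1
    ext r
    rw [smul_smul, ← Real.exp_add]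
    congr 2
    ring
  have h1 : HasDerivAt g (Real.exp (lam * t) • f t) t :=
    (hg.integral_hasStrictDerivAt 0 t).hasDerivAt
  have h2 : HasDerivAt (fun u => Real.exp (-lam * u)) (-lam * Real.exp (-lam * t)) t := by
    simpa [mul_comm] using ((hasDerivAt_id t).const_mul (-lam)).exp
  have h3 := h2.fun_smul h1
  have h4 : HasDerivAt (fun u => Real.exp (-lam * u) • g u)
      (f t - lam • (Real.exp (-lam * t) • g t)) t := by
    convert h3 using 1
    have e1 : Real.exp (-lam * t) • Real.exp (lam * t) • f t = f t := by
      rw [smul_smul, ← Real.exp_add, show -lam * t + lam * t = 0 by ring,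
        Real.exp_zero, one_smul]
    rw [e1]
    module
  rw [← key t] at h4
  exact h4.congr_of_eventuallyEq (Filter.Eventually.of_forall fun u => (key u))

end Aux

noncomputable def mvCLM (n m : ℕ) :
    Matrix (Fin n) (Fin m) ℝ →L[ℝ]
      (EuclideanSpace ℝ (Fin m) →L[ℝ] EuclideanSpace ℝ (Fin n)) :=
  LinearMap.toContinuousLinearMap
    ((LinearMap.toContinuousLinearMap :
        (EuclideanSpace ℝ (Fin m) →ₗ[ℝ] EuclideanSpace ℝ (Fin n)) ≃ₗ[ℝ] _).toLinearMap
      ∘ₗ (Matrix.toEuclideanLin :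
        Matrix (Fin n) (Fin m) ℝ ≃ₗ[ℝ] _).toLinearMap)

lemma mvCLM_apply {n m : ℕ} (A : Matrix (Fin n) (Fin m) ℝ) (x : EuclideanSpace ℝ (Fin m)) :
    mvCLM n m A x = mv A x := by
  simp [mvCLM, mv, Matrix.toEuclideanLin_apply]

noncomputable def mulCLM (m : ℕ) :
    Matrix (Fin m) (Fin m) ℝ →L[ℝ]
      (Matrix (Fin m) (Fin m) ℝ →L[ℝ] Matrix (Fin m) (Fin m) ℝ) :=
  LinearMap.toContinuousLinearMap
    ((LinearMap.toContinuousLinearMap :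
        (Matrix (Fin m) (Fin m) ℝ →ₗ[ℝ] Matrix (Fin m) (Fin m) ℝ) ≃ₗ[ℝ] _).toLinearMap
      ∘ₗ (LinearMap.mul ℝ (Matrix (Fin m) (Fin m) ℝ)))

lemma mulCLM_apply {m : ℕ} (A B : Matrix (Fin m) (Fin m) ℝ) : mulCLM m A B = A * B := rfl

lemma HasDerivAt.mv' {n m : ℕ} {A : ℝ → Matrix (Fin n) (Fin m) ℝ}
    {A' : Matrix (Fin n) (Fin m) ℝ} {x : ℝ → EuclideanSpace ℝ (Fin m)}
    {x' : EuclideanSpace ℝ (Fin m)} {t : ℝ}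
    (hA : HasDerivAt A A' t) (hx : HasDerivAt x x' t) :
    HasDerivAt (fun s => mv (A s) (x s)) (mv A' (x t) + mv (A t) x') t := by
  have h1 : HasDerivAt (fun s => mvCLM n m (A s)) (mvCLM n m A') t :=
    ((mvCLM n m).hasFDerivAt.comp_hasDerivAt t hA)
  have := h1.clm_apply hx
  simpa [mvCLM_apply] using this

lemma HasDerivAt.matmul {m : ℕ} {A B : ℝ → Matrix (Fin m) (Fin m) ℝ}
    {A' B' : Matrix (Fin m) (Fin m) ℝ} {t : ℝ}
    (hA : HasDerivAt A A' t) (hB : HasDerivAt B B' t) :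
    HasDerivAt (fun s => A s * B s) (A' * B t + A t * B') t := by
  letI : NormedAddCommGroup (Matrix (Fin m) (Fin m) ℝ →L[ℝ] Matrix (Fin m) (Fin m) ℝ) :=
    ContinuousLinearMap.toNormedAddCommGroup
  letI : NormedSpace ℝ (Matrix (Fin m) (Fin m) ℝ →L[ℝ] Matrix (Fin m) (Fin m) ℝ) :=
    ContinuousLinearMap.toNormedSpace
  have h1 : HasDerivAt (fun s => mulCLM m (A s)) (mulCLM m A') t :=
    ((mulCLM m).hasFDerivAt.comp_hasDerivAt t hA)
  have := h1.clm_apply hB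
  exact this

lemma differentiable_entry {k l : ℕ} (i : Fin k) (j : Fin l) :
    Differentiable ℝ (fun A : Matrix (Fin k) (Fin l) ℝ => A i j) := by
  have : (fun A : Matrix (Fin k) (Fin l) ℝ => A i j)
      = (ContinuousLinearMap.proj j : (Fin l → ℝ) →L[ℝ] ℝ).comp
        (ContinuousLinearMap.proj i : (Matrix (Fin k) (Fin l) ℝ) →L[ℝ] (Fin l → ℝ)) := rfl
  rw [this]
  exact ContinuousLinearMap.differentiable _

lemma differentiable_det {k : ℕ} :
    Differentiable ℝ (fun A : Matrix (Fin k) (Fin k) ℝ => A.det) := by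
  have : (fun A : Matrix (Fin k) (Fin k) ℝ => A.det)
      = fun A => ∑ σ : Equiv.Perm (Fin k), (Equiv.Perm.sign σ : ℝ) * ∏ i, A (σ i) i := by
    funext A; rw [Matrix.det_apply']
  rw [this]
  apply Differentiable.fun_sum
  intro σ _
  intro A
  exact DifferentiableAt.const_mul
    ((HasFDerivAt.finset_prod
      (fun i (_ : i ∈ Finset.univ) =>
        ((differentiable_entry (σ i) i) A).hasFDerivAt)).differentiableAt) _

lemma differentiable_updateRow {k : ℕ} (j : Fin k) (c : Fin k → ℝ) :
    Differentiable ℝ (fun A : Matrix (Fin k) (Fin k) ℝ => A.updateRow j c) := by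
  apply differentiable_pi.2
  intro i
  apply differentiable_pi.2
  intro l
  by_cases h : i = j
  · simp only [Matrix.updateRow_apply, h, if_true]
    exact differentiable_const _
  · simp only [Matrix.updateRow_apply, h, if_false]
    exact differentiable_entry i l

lemma differentiable_adjugate {k : ℕ} :
    Differentiable ℝ (fun A : Matrix (Fin k) (Fin k) ℝ => A.adjugate) := by
  apply differentiable_pi.2
  intro i
  apply differentiable_pi.2
  intro j
  have : (fun A : Matrix (Fin k) (Fin k) ℝ => A.adjugate i j)
      = fun A => (A.updateRow j (Pi.single i 1)).det := by
    funext A; rw [Matrix.adjugate_apply]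
  rw [this]
  exact differentiable_det.comp (differentiable_updateRow j _)

lemma posSemidef_integral {n m : ℕ} (lam : ℝ) {W : ℝ → Matrix (Fin n) (Fin m) ℝ}
    (hW : Continuous W) {t : ℝ} (ht : 0 ≤ t) :
    Matrix.PosSemidef (∫ r in (0:ℝ)..t, Real.exp (-lam * (t - r)) • ((W r)ᵀ * W r)) := by
  have hFc : Continuous fun r => Real.exp (-lam * (t - r)) • ((W r)ᵀ * W r) := by
    apply Continuous.fun_smul
    · exact Real.continuous_exp.comp (continuous_const.mul (continuous_const.sub continuous_id))
    · exact (hW.matrix_transpose).matrix_mul hW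
  have hFi : IntervalIntegrable _ volume (0:ℝ) t := hFc.intervalIntegrable (0:ℝ) t
  refine Matrix.PosSemidef.of_dotProduct_mulVec_nonneg ?_ ?_
  · -- Hermitian
    show _ᴴ = _
    have hT : ∀ B : Matrix (Fin m) (Fin m) ℝ, Bᴴ = Bᵀ := fun B => by
      ext i j; simp [Matrix.conjTranspose_apply]
    rw [hT]
    set L : Matrix (Fin m) (Fin m) ℝ →L[ℝ] Matrix (Fin m) (Fin m) ℝ :=
      LinearMap.toContinuousLinearMap
        (Matrix.transposeLinearEquiv (Fin m) (Fin m) ℝ ℝ).toLinearMap with hL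
    have happ : ∀ B, L B = Bᵀ := fun B => rfl
    rw [← happ]; erw [← L.intervalIntegral_comp_comm hFi]
    congr 1
    funext r
    erw [happ]
    rw [Matrix.transpose_smul, Matrix.transpose_mul, Matrix.transpose_transpose]
  · -- nonneg quadratic form
    intro x
    have hsx : star x = x := by
      funext i; simp
    rw [hsx]
    set φ : Matrix (Fin m) (Fin m) ℝ →L[ℝ] ℝ :=
      LinearMap.toContinuousLinearMap
        { toFun := fun M : Matrix (Fin m) (Fin m) ℝ => x ⬝ᵥ (M *ᵥ x)
          map_add' := fun M N => by
            simp only [Matrix.add_mulVec, dotProduct_add]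
          map_smul' := fun c M => by
            simp only [Matrix.smul_mulVec, dotProduct_smul, RingHom.id_apply,
              smul_eq_mul] } with hφ
    have happ : ∀ M, φ M = x ⬝ᵥ (M *ᵥ x) := fun M => rfl
    rw [← happ]; erw [← φ.intervalIntegral_comp_comm hFi]
    apply intervalIntegral.integral_nonneg ht
    intro r _
    erw [happ]; rw [Matrix.smul_mulVec, dotProduct_smul, smul_eq_mul]
    apply mul_nonneg (Real.exp_nonneg _)
    have h := (Matrix.posSemidef_conjTranspose_mul_self (W r)).dotProduct_mulVec_nonneg x
    have hT : (W r)ᴴ = (W r)ᵀ := by ext i j; simp [Matrix.conjTranspose_apply]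
    rwa [hT, hsx] at h

section MVLemmas

variable {n m k : ℕ} (A B : Matrix (Fin n) (Fin m) ℝ) (C : Matrix (Fin m) (Fin k) ℝ)
  (x y : EuclideanSpace ℝ (Fin m)) (z : EuclideanSpace ℝ (Fin k)) (c : ℝ)

lemma mv_add : mv A (x + y) = mv A x + mv A y := by simp [mv, Matrix.mulVec_add]
lemma mv_sub : mv A (x - y) = mv A x - mv A y := by simp [mv, Matrix.mulVec_sub]
lemma mv_smul : mv A (c • x) = c • mv A x := by simp [mv, Matrix.mulVec_smul]
lemma mv_matadd : mv (A + B) x = mv A x + mv B x := by simp [mv, Matrix.add_mulVec]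
lemma mv_matsub : mv (A - B) x = mv A x - mv B x := by simp [mv, Matrix.sub_mulVec]
lemma mv_matsmul : mv (c • A) x = c • mv A x := by simp [mv, Matrix.smul_mulVec]
lemma mv_matneg : mv (-A) x = -(mv A x) := by
  rw [show -A = (-1 : ℝ) • A by simp, mv_matsmul]
  simp
lemma mv_mul : mv (A * C) z = mv A (mv C z) := by simp [mv, Matrix.mulVec_mulVec]
lemma mv_one : mv (1 : Matrix (Fin m) (Fin m) ℝ) x = x := by simp [mv, Matrix.one_mulVec]

end MVLemmas

/-- With `â* t = P̄ t · b t`, `P̄ t = (G t)⁻¹`,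
`G t = ∫₀ᵗ exp (-λ(t-r)) (W r)ᵀ (W r) dr + γ • 1`,
`b t = ∫₀ᵗ exp (-λ(t-r)) (W r)ᵀ (y₁ r) dr` and filtered prediction error
`e₁ t = W t (â* t) - y₁ t`, the map `t ↦ â* t` is differentiable for `t > 0` and satisfies
`(â*)' t = -P̄ t ((W t)ᵀ (e₁ t) + λγ • â* t)`. -/
theorem stmt_6 (n m : ℕ) (lam gam : ℝ) (hlam : 0 < lam) (hgam : 0 < gam)
    (W : ℝ → Matrix (Fin n) (Fin m) ℝ) (hW : Continuous W)
    (y₁ : ℝ → EuclideanSpace ℝ (Fin n)) (hy₁ : Continuous y₁)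
    (G : ℝ → Matrix (Fin m) (Fin m) ℝ)
    (hG : ∀ t : ℝ, G t =
      (∫ r in (0:ℝ)..t, Real.exp (-lam * (t - r)) • ((W r)ᵀ * W r))
        + gam • (1 : Matrix (Fin m) (Fin m) ℝ))
    (b : ℝ → EuclideanSpace ℝ (Fin m))
    (hb : ∀ t : ℝ, b t = ∫ r in (0:ℝ)..t, Real.exp (-lam * (t - r)) • mv ((W r)ᵀ) (y₁ r))
    (astar : ℝ → EuclideanSpace ℝ (Fin m)) (hastar : ∀ t : ℝ, astar t = mv (G t)⁻¹ (b t))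
    (e₁ : ℝ → EuclideanSpace ℝ (Fin n)) (he₁ : ∀ t : ℝ, e₁ t = mv (W t) (astar t) - y₁ t) :
    ∀ t : ℝ, 0 < t →
      HasDerivAt astar (-(mv (G t)⁻¹ (mv ((W t)ᵀ) (e₁ t) + (lam * gam) • astar t))) t := by
  intro t ht
  -- continuity of integrands
  have hWTW : Continuous fun r => (W r)ᵀ * W r := (hW.matrix_transpose).matrix_mul hW
  have hWy : Continuous fun r => mv ((W r)ᵀ) (y₁ r) := by
    have : Continuous fun r => mvCLM m n ((W r)ᵀ) :=
      (mvCLM m n).continuous.comp hW.matrix_transpose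
    exact this.clm_apply hy₁
  -- derivative of G
  have hGfun : G = fun u => (∫ r in (0:ℝ)..u, Real.exp (-lam * (u - r)) • ((W r)ᵀ * W r))
      + gam • (1 : Matrix (Fin m) (Fin m) ℝ) := funext hG
  have hIint : (∫ r in (0:ℝ)..t, Real.exp (-lam * (t - r)) • ((W r)ᵀ * W r))
      = G t - gam • 1 := by rw [hG t]; abel
  have hG' : HasDerivAt G ((W t)ᵀ * W t - lam • (G t - gam • 1)) t := by
    have h0 := (hasDerivAt_exp_kernel lam hWTW t).add_const (gam • (1 : Matrix (Fin m) (Fin m) ℝ))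
    rw [hIint] at h0
    exact h0.congr_of_eventuallyEq (Filter.Eventually.of_forall fun u => hG u)
  -- derivative of b
  have hbfun : b = fun u => ∫ r in (0:ℝ)..u, Real.exp (-lam * (u - r)) • mv ((W r)ᵀ) (y₁ r) :=
    funext hb
  have hb' : HasDerivAt b (mv ((W t)ᵀ) (y₁ t) - lam • b t) t := by
    have h0 := hasDerivAt_exp_kernel lam hWy t
    rw [← hb t] at h0
    exact h0.congr_of_eventuallyEq (Filter.Eventually.of_forall fun u => hb u)
  -- positive definiteness of G on Ioi 0
  have hGpos : ∀ s : ℝ, 0 < s → (G s).PosDef := by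
    intro s hs
    rw [hG s]
    apply Matrix.PosDef.posSemidef_add (posSemidef_integral lam hW hs.le)
    have h1 : gam • (1 : Matrix (Fin m) (Fin m) ℝ) = Matrix.diagonal fun _ => gam := by
      ext i j
      by_cases h : i = j <;>
        simp [Matrix.smul_apply, Matrix.one_apply, Matrix.diagonal_apply, h]
    rw [h1]
    exact Matrix.PosDef.diagonal fun _ => hgam
  have hdet : ∀ s : ℝ, 0 < s → (G s).det ≠ 0 := fun s hs => (hGpos s hs).det_pos.ne'
  have hdetU : ∀ s : ℝ, 0 < s → IsUnit (G s).det := fun s hs => (hdet s hs).isUnit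
  -- differentiability of the inverse
  set ψ : ℝ → Matrix (Fin m) (Fin m) ℝ := fun s => (G s)⁻¹ with hψdef
  have hψeq : ψ = fun s => ((G s).det)⁻¹ • (G s).adjugate := by
    funext s
    show (G s)⁻¹ = _
    rw [Matrix.inv_def, Ring.inverse_eq_inv']
  have hGdiff : DifferentiableAt ℝ G t := hG'.differentiableAt
  have hψdiff : DifferentiableAt ℝ ψ t := by
    rw [hψeq]
    exact (((differentiable_det (G t)).comp t hGdiff).inv (hdet t ht)).smul
      ((differentiable_adjugate (G t)).comp t hGdiff)
  have hψ : HasDerivAt ψ (deriv ψ t) t := hψdiff.hasDerivAt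
  set Dψ : Matrix (Fin m) (Fin m) ℝ := deriv ψ t with hDψdef
  -- ψ * G = 1 near t, so derivative of product is zero
  have hmul : HasDerivAt (fun s => ψ s * G s)
      (Dψ * G t + ψ t * ((W t)ᵀ * W t - lam • (G t - gam • 1))) t := hψ.matmul hG'
  have hone : HasDerivAt (fun _ : ℝ => (1 : Matrix (Fin m) (Fin m) ℝ)) 0 t :=
    hasDerivAt_const t 1
  have heq : (fun s => ψ s * G s) =ᶠ[nhds t] fun _ => (1 : Matrix (Fin m) (Fin m) ℝ) := by
    filter_upwards [Ioi_mem_nhds ht] with s hs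
    exact Matrix.nonsing_inv_mul (G s) (hdetU s hs)
  have hmul0 : HasDerivAt (fun s => ψ s * G s) 0 t := hone.congr_of_eventuallyEq heq
  have huniq : Dψ * G t + ψ t * ((W t)ᵀ * W t - lam • (G t - gam • 1)) = 0 :=
    hmul.unique hmul0
  have hGψ : G t * ψ t = 1 := Matrix.mul_nonsing_inv (G t) (hdetU t ht)
  have hDψeq : Dψ = -(ψ t * ((W t)ᵀ * W t - lam • (G t - gam • 1)) * ψ t) := by
    have h1 : Dψ * G t = -(ψ t * ((W t)ᵀ * W t - lam • (G t - gam • 1))) :=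
      eq_neg_of_add_eq_zero_left huniq
    calc Dψ = Dψ * 1 := by rw [mul_one]
    _ = Dψ * (G t * ψ t) := by rw [hGψ]
    _ = (Dψ * G t) * ψ t := by rw [mul_assoc]
    _ = -(ψ t * ((W t)ᵀ * W t - lam • (G t - gam • 1))) * ψ t := by rw [h1]
    _ = -(ψ t * ((W t)ᵀ * W t - lam • (G t - gam • 1)) * ψ t) := by
      rw [neg_mul]
  -- derivative of astar
  have hastarfun : astar = fun s => mv (ψ s) (b s) := funext hastar
  have hD : HasDerivAt astar (mv Dψ (b t) + mv (ψ t) (mv ((W t)ᵀ) (y₁ t) - lam • b t)) t := by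
    rw [hastarfun]
    exact hψ.mv' hb'
  -- identify the derivative value
  have hψb : mv (ψ t) (b t) = astar t := (hastar t).symm
  have hGa : mv (G t) (astar t) = b t := by
    rw [hastar t, ← mv_mul, hGψ, mv_one]
  have hval : mv Dψ (b t) + mv (ψ t) (mv ((W t)ᵀ) (y₁ t) - lam • b t)
      = -(mv (G t)⁻¹ (mv ((W t)ᵀ) (e₁ t) + (lam * gam) • astar t)) := by
    rw [hDψeq, he₁ t]
    rw [mv_matneg, mv_mul, mv_mul, hψb]
    rw [show ((W t)ᵀ * W t - lam • (G t - gam • 1)) =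
      ((W t)ᵀ * W t) - lam • G t + (lam * gam) • 1 by rw [smul_sub, smul_smul]; abel]
    rw [mv_matadd, mv_matsub, mv_matsmul, mv_matsmul, mv_one, mv_mul, hGa]
    have hPψ : (G t)⁻¹ = ψ t := rfl
    rw [hPψ]
    simp only [mv_add, mv_sub, mv_smul, hψb]
    module
  rwa [hval] at hD
end

section
/- Let s : ℝ → ℝⁿ and ã : ℝ → ℝᵐ be differentiable, let H : ℝ → Matrix (Fin n) (Fin n) ℝ and G : ℝ → Matrix (Fin m) (Fin m) ℝ be differentiable with H(t) and G(t) symmetric for each t, and suppose: (i) H(t)·ṡ(t) + (C(t) + K)·s(t) − φ(t)·ã(t) = d(t); (ii) G(t)·ã′(t) + φ(t)ᵀ s(t) + (W(t)ᵀW(t) + λγ·I)·ã(t) = −(W(t)ᵀ d₁(t) + λγ·a); (iii) H′(t) − 2·C(t) is skew-symmetric; (iv) G′(t) = W(t)ᵀW(t) − λ·G(t) + λγ·I. Then the Lyapunov-like function V(t) = s(t)ᵀ H(t) s(t) + ã(t)ᵀ G(t) ã(t) is differentiable and satisfies the identity V′(t) = −2·s(t)ᵀ K s(t) − ã(t)ᵀ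 (λ·G(t) + λγ·I + W(t)ᵀW(t)) ã(t) + 2·s(t)ᵀ d(t) − 2·ã(t)ᵀ (W(t)ᵀ d₁(t) + λγ·a). -/
open scoped Matrix

attribute [local instance] Matrix.normedAddCommGroup Matrix.normedSpace

lemma quad_deriv {k : ℕ} (M M' : ℝ → Matrix (Fin k) (Fin k) ℝ)
    (v v' : ℝ → Fin k → ℝ) (t : ℝ)
    (hM : HasDerivAt M (M' t) t) (hv : HasDerivAt v (v' t) t) :
    HasDerivAt (fun u => v u ⬝ᵥ (M u *ᵥ v u))
      (v' t ⬝ᵥ (M t *ᵥ v t) + v t ⬝ᵥ (M' t *ᵥ v t) + v t ⬝ᵥ (M t *ᵥ v' t)) t := by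
  have hMij : ∀ i j, HasDerivAt (fun u => M u i j) (M' t i j) t := by
    intro i j
    exact hasDerivAt_pi.mp (hasDerivAt_pi.mp hM i) j
  have hvi : ∀ i, HasDerivAt (fun u => v u i) (v' t i) t := fun i => hasDerivAt_pi.mp hv i
  have key : HasDerivAt (fun u => ∑ i, ∑ j, v u i * M u i j * v u j)
      (∑ i, ∑ j, (v' t i * M t i j * v t j + v t i * M' t i j * v t j
        + v t i * M t i j * v' t j)) t := by
    apply HasDerivAt.fun_sum; intro i _
    apply HasDerivAt.fun_sum; intro j _
    have h := (((hvi i).mul (hMij i j)).mul (hvi j))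
    convert h using 1
    · rfl
    · rfl
    simp only [Pi.mul_apply]
    ring
  convert key using 1
  · funext u
    simp [dotProduct, Matrix.mulVec, Finset.mul_sum, mul_assoc]
  · simp [dotProduct, Matrix.mulVec, Finset.mul_sum, Finset.sum_add_distrib, mul_assoc]

/-- Under the stacked closed-loop dynamics, skew-symmetry of `H' - 2C` and
the Gram-matrix ODE `G' = Wᵀ W - λ G + λγ • 1`, the Lyapunov-like function
`V = sᵀ H s + ãᵀ G ã` is differentiable with
`V' = -2 sᵀ K s - ãᵀ (λ G + λγ • 1 + Wᵀ W) ã + 2 sᵀ d - 2 ãᵀ (Wᵀ d₁ + λγ a)`. -/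
theorem stmt_11 (n m : ℕ) (lam gam : ℝ) (hlam : 0 < lam) (hgam : 0 < gam)
    (H H' : ℝ → Matrix (Fin n) (Fin n) ℝ) (G G' : ℝ → Matrix (Fin m) (Fin m) ℝ)
    (hHd : ∀ t : ℝ, HasDerivAt H (H' t) t) (hGd : ∀ t : ℝ, HasDerivAt G (G' t) t)
    (hHsym : ∀ t : ℝ, (H t)ᵀ = H t) (hGsym : ∀ t : ℝ, (G t)ᵀ = G t)
    (C : ℝ → Matrix (Fin n) (Fin n) ℝ) (φ W : ℝ → Matrix (Fin n) (Fin m) ℝ)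
    (K : Matrix (Fin n) (Fin n) ℝ)
    (s s' : ℝ → Fin n → ℝ) (atil atil' : ℝ → Fin m → ℝ)
    (hs : ∀ t : ℝ, HasDerivAt s (s' t) t) (hatil : ∀ t : ℝ, HasDerivAt atil (atil' t) t)
    (d d₁ : ℝ → Fin n → ℝ) (a : Fin m → ℝ)
    (hdyn1 : ∀ t : ℝ, H t *ᵥ s' t + (C t + K) *ᵥ s t - φ t *ᵥ atil t = d t)
    (hdyn2 : ∀ t : ℝ,
      G t *ᵥ atil' t + (φ t)ᵀ *ᵥ s t
        + ((W t)ᵀ * W t + (lam * gam) • (1 : Matrix (Fin m) (Fin m) ℝ)) *ᵥ atil t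
      = -((W t)ᵀ *ᵥ d₁ t + (lam * gam) • a))
    (hskew : ∀ t : ℝ, (H' t - (2:ℝ) • C t)ᵀ = -(H' t - (2:ℝ) • C t))
    (hG' : ∀ t : ℝ,
      G' t = (W t)ᵀ * W t - lam • G t + (lam * gam) • (1 : Matrix (Fin m) (Fin m) ℝ))
    (V : ℝ → ℝ)
    (hV : ∀ t : ℝ, V t = s t ⬝ᵥ (H t *ᵥ s t) + atil t ⬝ᵥ (G t *ᵥ atil t)) :
    ∀ t : ℝ,
      HasDerivAt V
        (-2 * (s t ⬝ᵥ (K *ᵥ s t))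
          - atil t ⬝ᵥ ((lam • G t + (lam * gam) • (1 : Matrix (Fin m) (Fin m) ℝ)
              + (W t)ᵀ * W t) *ᵥ atil t)
          + 2 * (s t ⬝ᵥ d t) - 2 * (atil t ⬝ᵥ ((W t)ᵀ *ᵥ d₁ t + (lam * gam) • a))) t := by
  intro t
  have hVfun : V = fun u => s u ⬝ᵥ (H u *ᵥ s u) + atil u ⬝ᵥ (G u *ᵥ atil u) := funext hV
  rw [hVfun]
  have hD := (quad_deriv H H' s s' t (hHd t) (hs t)).add
    (quad_deriv G G' atil atil' t (hGd t) (hatil t))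
  convert hD using 1
  · rfl
  · rfl
  · rfl
  -- symmetry swaps
  have f1 : s' t ⬝ᵥ (H t *ᵥ s t) = s t ⬝ᵥ (H t *ᵥ s' t) := by
    rw [Matrix.dotProduct_mulVec, ← Matrix.mulVec_transpose, hHsym, dotProduct_comm]
  have f2 : atil' t ⬝ᵥ (G t *ᵥ atil t) = atil t ⬝ᵥ (G t *ᵥ atil' t) := by
    rw [Matrix.dotProduct_mulVec, ← Matrix.mulVec_transpose, hGsym, dotProduct_comm]
  -- skew-symmetry gives sᵀ H' s = 2 sᵀ C s
  have f3 : s t ⬝ᵥ (H' t *ᵥ s t) = 2 * (s t ⬝ᵥ (C t *ᵥ s t)) := by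
    have h0 : s t ⬝ᵥ ((H' t - (2:ℝ) • C t) *ᵥ s t)
        = -(s t ⬝ᵥ ((H' t - (2:ℝ) • C t) *ᵥ s t)) := by
      conv_lhs => rw [Matrix.dotProduct_mulVec, ← Matrix.mulVec_transpose, hskew,
        Matrix.neg_mulVec, neg_dotProduct, dotProduct_comm]
    have h1 : s t ⬝ᵥ ((H' t - (2:ℝ) • C t) *ᵥ s t) = 0 := by linarith
    have h2 := h1
    rw [Matrix.sub_mulVec, dotProduct_sub, Matrix.smul_mulVec,
      dotProduct_smul] at h2
    simp at h2
    linarith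
  -- dot hdyn1 with s t
  have f4 := congrArg (fun v => s t ⬝ᵥ v) (hdyn1 t)
  simp only [dotProduct_add, dotProduct_sub, Matrix.add_mulVec] at f4
  -- dot hdyn2 with atil t
  have f5 := congrArg (fun v => atil t ⬝ᵥ v) (hdyn2 t)
  simp only [dotProduct_add, Matrix.add_mulVec, dotProduct_neg] at f5
  -- cross term
  have f6 : atil t ⬝ᵥ ((φ t)ᵀ *ᵥ s t) = s t ⬝ᵥ (φ t *ᵥ atil t) := by
    rw [Matrix.dotProduct_mulVec, Matrix.vecMul_transpose, dotProduct_comm]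
  rw [f1, f2, f3, hG']
  simp only [Matrix.add_mulVec, Matrix.sub_mulVec, Matrix.smul_mulVec,
    dotProduct_add, dotProduct_sub, dotProduct_smul,
    Matrix.one_mulVec, smul_eq_mul] at *
  linarith
end

section
/- (Main theorem, robust composite adaptation.) Let n, m : ℕ, λ, γ > 0, and let the following hold for all t ≥ 0: H : ℝ → Matrix (Fin n) (Fin n) ℝ and G : ℝ → Matrix (Fin m) (Fin m) ℝ are differentiable with H(t), G(t) symmetric positive definite; C, φ, W are continuous matrix-valued functions of sizes n×n, n×m, n×m; K is a constant symmetric positive definite n×n matrix with smallest eigenvalue k > 0; s : ℝ → ℝⁿ and ã : ℝ → ℝᵐ are differentiable and satisfy the stacked closed-loop dynamics H(t)ṡ(t) + (C(t)+K)s(t) − φ(t)ã(t) = d(t) and G(t)ã′(t) + φ(t)ᵀs(t) + (W(t)ᵀW(t) + λγ·I)ã(t) = −(W(t)ᵀd₁(t) + λγ·a); H′(t) − 2C(t) is skew-symmetric; G′(t) = W(t)ᵀW(t) − λ·G(t) + λγ·I; every eigenvalue of H(t) and of G(t) lies in [m₁, m₂] with 0 < m₁ ≤ m₂; and ‖(d(t),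 W(t)ᵀd₁(t) + λγ·a)‖ ≤ D̄ for all t, where (·,·) is the concatenated vector in ℝⁿ⁺ᵐ. Set λ_con = min(k, (λ/2)·(m₁ + γ))/m₂ and y(t) = (s(t), ã(t)) ∈ ℝⁿ⁺ᵐ. Then for all t ≥ 0, ‖y(t)‖ ≤ √(m₂/m₁)·‖y(0)‖·exp(−λ_con t) + (D̄/(λ_con·m₁))·(1 − exp(−λ_con t)); in particular the composite tracking error s and parameter estimation error ã converge exponentially, with rate λ_con, to the error ball of radius D̄/(λ_con·m₁). -/
open scoped Matrix

attribute [local instance] Matrix.normedAddCommGroup Matrix.normedSpace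

section Aux

open Filter Set

lemma aux_dot_eq_inner {N : ℕ} (u v : EuclideanSpace ℝ (Fin N)) :
    (inner ℝ u v : ℝ) = u ⬝ᵥ v := by
  simp [PiLp.inner_apply, dotProduct, RCLike.inner_apply, mul_comm]

lemma aux_dot_self_nonneg {N : ℕ} (x : Fin N → ℝ) : 0 ≤ x ⬝ᵥ x :=
  Finset.sum_nonneg fun i _ => mul_self_nonneg _

lemma aux_dot_symm {N : ℕ} {A : Matrix (Fin N) (Fin N) ℝ} (hA : Aᵀ = A) (x y : Fin N → ℝ) :
    x ⬝ᵥ (A *ᵥ y) = y ⬝ᵥ (A *ᵥ x) := by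
  rw [Matrix.dotProduct_mulVec, ← Matrix.vecMul_transpose, hA, dotProduct_comm]

lemma aux_dot_tr {N M : ℕ} (A : Matrix (Fin N) (Fin M) ℝ) (x : Fin M → ℝ) (y : Fin N → ℝ) :
    x ⬝ᵥ (Aᵀ *ᵥ y) = (A *ᵥ x) ⬝ᵥ y := by
  rw [Matrix.dotProduct_mulVec, Matrix.vecMul_transpose]

lemma aux_qform_ge {N : ℕ} (A : Matrix (Fin N) (Fin N) ℝ) (hA : Aᵀ = A) (c : ℝ)
    (hc : ∀ μ : ℝ, Module.End.HasEigenvalue A.mulVecLin μ → c ≤ μ)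
    (x : EuclideanSpace ℝ (Fin N)) :
    c * (x ⬝ᵥ x) ≤ x ⬝ᵥ (A *ᵥ x) := by
  classical
  set T : EuclideanSpace ℝ (Fin N) →ₗ[ℝ] EuclideanSpace ℝ (Fin N) := Matrix.toEuclideanLin A with hT
  have hsym : T.IsSymmetric := by
    intro u v
    rw [aux_dot_eq_inner, aux_dot_eq_inner]
    show (A *ᵥ u) ⬝ᵥ v = u ⬝ᵥ (A *ᵥ v)
    rw [dotProduct_comm]
    exact aux_dot_symm hA v u
  have hn : Module.finrank ℝ (EuclideanSpace ℝ (Fin N)) = N := finrank_euclideanSpace_fin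
  set b := hsym.eigenvectorBasis hn
  set μ := hsym.eigenvalues hn
  have hx2 : (x ⬝ᵥ x) = ∑ i, (inner ℝ x (b i) : ℝ) ^ 2 := by
    rw [← aux_dot_eq_inner x x, ← b.sum_inner_mul_inner x x]
    refine Finset.sum_congr rfl fun i _ => ?_
    rw [real_inner_comm x (b i), sq]
  have hTx : x ⬝ᵥ (A *ᵥ x) = ∑ i, μ i * (inner ℝ x (b i) : ℝ) ^ 2 := by
    rw [show x ⬝ᵥ (A *ᵥ x) = (inner ℝ x (T x) : ℝ) from (aux_dot_eq_inner x (T x)).symm,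
      ← b.sum_inner_mul_inner x (T x)]
    refine Finset.sum_congr rfl fun i _ => ?_
    have h1 : (inner ℝ (b i) (T x) : ℝ) = inner ℝ (T (b i)) x := (hsym (b i) x).symm
    rw [h1, hsym.apply_eigenvectorBasis, real_inner_smul_left, real_inner_comm x (b i)]
    simp only [RCLike.ofReal_real_eq_id, id]
    ring
  rw [hx2, hTx, Finset.mul_sum]
  refine Finset.sum_le_sum fun i _ => ?_
  have hev : Module.End.HasEigenvalue A.mulVecLin (μ i) := by
    apply Module.End.hasEigenvalue_of_hasEigenvector (x := (b i).ofLp)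
    refine ⟨Module.End.mem_eigenspace_iff.mpr ?_, ?_⟩
    · exact congrArg WithLp.ofLp (hsym.apply_eigenvectorBasis hn i)
    · intro h0
      exact b.orthonormal.ne_zero i (by simpa using congrArg (WithLp.toLp 2) h0)
  exact mul_le_mul_of_nonneg_right (hc _ hev) (sq_nonneg _)

lemma aux_qform_le {N : ℕ} (A : Matrix (Fin N) (Fin N) ℝ) (hA : Aᵀ = A) (c : ℝ)
    (hc : ∀ μ : ℝ, Module.End.HasEigenvalue A.mulVecLin μ → μ ≤ c)
    (x : EuclideanSpace ℝ (Fin N)) :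
    x ⬝ᵥ (A *ᵥ x) ≤ c * (x ⬝ᵥ x) := by
  classical
  set T : EuclideanSpace ℝ (Fin N) →ₗ[ℝ] EuclideanSpace ℝ (Fin N) := Matrix.toEuclideanLin A with hT
  have hsym : T.IsSymmetric := by
    intro u v
    rw [aux_dot_eq_inner, aux_dot_eq_inner]
    show (A *ᵥ u) ⬝ᵥ v = u ⬝ᵥ (A *ᵥ v)
    rw [dotProduct_comm]
    exact aux_dot_symm hA v u
  have hn : Module.finrank ℝ (EuclideanSpace ℝ (Fin N)) = N := finrank_euclideanSpace_fin
  set b := hsym.eigenvectorBasis hn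
  set μ := hsym.eigenvalues hn
  have hx2 : (x ⬝ᵥ x) = ∑ i, (inner ℝ x (b i) : ℝ) ^ 2 := by
    rw [← aux_dot_eq_inner x x, ← b.sum_inner_mul_inner x x]
    refine Finset.sum_congr rfl fun i _ => ?_
    rw [real_inner_comm x (b i), sq]
  have hTx : x ⬝ᵥ (A *ᵥ x) = ∑ i, μ i * (inner ℝ x (b i) : ℝ) ^ 2 := by
    rw [show x ⬝ᵥ (A *ᵥ x) = (inner ℝ x (T x) : ℝ) from (aux_dot_eq_inner x (T x)).symm,
      ← b.sum_inner_mul_inner x (T x)]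
    refine Finset.sum_congr rfl fun i _ => ?_
    have h1 : (inner ℝ (b i) (T x) : ℝ) = inner ℝ (T (b i)) x := (hsym (b i) x).symm
    rw [h1, hsym.apply_eigenvectorBasis, real_inner_smul_left, real_inner_comm x (b i)]
    simp only [RCLike.ofReal_real_eq_id, id]
    ring
  rw [hx2, hTx, Finset.mul_sum]
  refine Finset.sum_le_sum fun i _ => ?_
  have hev : Module.End.HasEigenvalue A.mulVecLin (μ i) := by
    apply Module.End.hasEigenvalue_of_hasEigenvector (x := (b i).ofLp)
    refine ⟨Module.End.mem_eigenspace_iff.mpr ?_, ?_⟩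
    · exact congrArg WithLp.ofLp (hsym.apply_eigenvectorBasis hn i)
    · intro h0
      exact b.orthonormal.ne_zero i (by simpa using congrArg (WithLp.toLp 2) h0)
  exact mul_le_mul_of_nonneg_right (hc _ hev) (sq_nonneg _)


lemma aux_slope_freq {f : ℝ → ℝ} {v x : ℝ} (hf : HasDerivAt f v x) :
    ∀ r, v < r → ∃ᶠ z in nhdsWithin x (Set.Ioi x), (z - x)⁻¹ * (f z - f x) < r := by
  intro r hr
  have h1 : HasDerivWithinAt f v (Set.Ioi x) x := hf.hasDerivWithinAt
  rw [hasDerivWithinAt_iff_tendsto_slope, Set.diff_singleton_eq_self (by simp)] at h1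
  have h2 : ∀ᶠ z in nhdsWithin x (Set.Ioi x), slope f x z < r :=
    h1.eventually_lt_const hr
  refine (h2.mono fun z hz => ?_).frequently
  rwa [slope_def_field, div_eq_inv_mul] at hz

lemma aux_entry_deriv {N M : ℕ} {A : ℝ → Matrix (Fin N) (Fin M) ℝ}
    {A' : Matrix (Fin N) (Fin M) ℝ} {t : ℝ} (hA : HasDerivAt A A' t) (i : Fin N) (j : Fin M) :
    HasDerivAt (fun u => A u i j) (A' i j) t := by
  have h := (((LinearMap.proj j).comp
      (LinearMap.proj (R := ℝ) (φ := fun _ : Fin N => Fin M → ℝ) i)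
      ).toContinuousLinearMap).hasFDerivAt.comp_hasDerivAt t hA
  exact h

lemma aux_comp_deriv {N : ℕ} {x : ℝ → EuclideanSpace ℝ (Fin N)}
    {x' : EuclideanSpace ℝ (Fin N)} {t : ℝ} (hx : HasDerivAt x x' t) (i : Fin N) :
    HasDerivAt (fun u => x u i) (x' i) t := by
  have h := (EuclideanSpace.proj (𝕜 := ℝ) i).hasFDerivAt.comp_hasDerivAt t hx
  exact h

lemma aux_qform_deriv {N : ℕ} {A : ℝ → Matrix (Fin N) (Fin N) ℝ}
    {A' : Matrix (Fin N) (Fin N) ℝ} {x : ℝ → EuclideanSpace ℝ (Fin N)}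
    {x' : EuclideanSpace ℝ (Fin N)} {t : ℝ}
    (hA : HasDerivAt A A' t) (hx : HasDerivAt x x' t) :
    HasDerivAt (fun u => x u ⬝ᵥ (A u *ᵥ x u))
      (x' ⬝ᵥ (A t *ᵥ x t) + x t ⬝ᵥ (A' *ᵥ x t) + x t ⬝ᵥ (A t *ᵥ x')) t := by
  have h : HasDerivAt (fun u => ∑ i, x u i * ∑ j, A u i j * x u j)
      (∑ i, ((x' i) * (∑ j, A t i j * x t j)
        + x t i * (∑ j, (A' i j * x t j + A t i j * x' j)))) t := by
    refine HasDerivAt.fun_sum fun i _ => ?_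
    exact (aux_comp_deriv hx i).mul
      (HasDerivAt.fun_sum fun j _ => ((aux_entry_deriv hA i j).mul (aux_comp_deriv hx j)))
  convert h using 1
  simp only [dotProduct, Matrix.mulVec, Finset.mul_sum, Finset.sum_add_distrib,
    mul_add, ← mul_assoc]
  ring_nf
  simp only [dotProduct, Matrix.mulVec, Finset.mul_sum, Finset.sum_add_distrib,
    mul_add, ← mul_assoc]
  ring_nf

lemma aux_cs2 {a b c f : ℝ} (ha : 0 ≤ a) (hb : 0 ≤ b) (hc : 0 ≤ c) (hf : 0 ≤ f) :
    a * c + b * f ≤ Real.sqrt (a ^ 2 + b ^ 2) * Real.sqrt (c ^ 2 + f ^ 2) := by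
  have h1 : (a * c + b * f) ^ 2 ≤ (a ^ 2 + b ^ 2) * (c ^ 2 + f ^ 2) := by
    nlinarith [sq_nonneg (a * f - b * c)]
  calc a * c + b * f = Real.sqrt ((a * c + b * f) ^ 2) :=
        (Real.sqrt_sq (by positivity)).symm
    _ ≤ Real.sqrt ((a ^ 2 + b ^ 2) * (c ^ 2 + f ^ 2)) := Real.sqrt_le_sqrt h1
    _ = _ := Real.sqrt_mul (by positivity) _

lemma aux_norm_sq_dot {N : ℕ} (x : EuclideanSpace ℝ (Fin N)) : ‖x‖ ^ 2 = x ⬝ᵥ x := by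
  rw [← real_inner_self_eq_norm_sq, aux_dot_eq_inner]

end Aux

set_option maxHeartbeats 1000000 in
/-- Main theorem, robust composite adaptation: under the stacked
closed-loop dynamics, skew-symmetry of `H' - 2C`, the Gram-matrix ODE
`G' = Wᵀ W - λ G + λγ • 1`, eigenvalue bounds `[m₁, m₂]` for `H t` and `G t`,
`K` symmetric positive definite with smallest eigenvalue `k > 0`, and disturbance bound
`‖(d t, (W t)ᵀ d₁ t + λγ a)‖ ≤ D̄`, the concatenated error `y t = (s t, ã t)` satisfies,
with `λ_con = min (k, (λ/2)(m₁ + γ)) / m₂`,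
`‖y t‖ ≤ √(m₂/m₁) ‖y 0‖ exp (-λ_con t) + (D̄ / (λ_con m₁)) (1 - exp (-λ_con t))`,
i.e. `s` and `ã` converge exponentially, with rate `λ_con`, to the error ball of radius
`D̄ / (λ_con m₁)`. -/
theorem stmt_15 (n m : ℕ) (lam gam : ℝ) (hlam : 0 < lam) (hgam : 0 < gam)
    (H H' : ℝ → Matrix (Fin n) (Fin n) ℝ) (G G' : ℝ → Matrix (Fin m) (Fin m) ℝ)
    (hHd : ∀ t : ℝ, 0 ≤ t → HasDerivAt H (H' t) t)
    (hGd : ∀ t : ℝ, 0 ≤ t → HasDerivAt G (G' t) t)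
    (hHsym : ∀ t : ℝ, 0 ≤ t → (H t)ᵀ = H t) (hGsym : ∀ t : ℝ, 0 ≤ t → (G t)ᵀ = G t)
    (hHpd : ∀ t : ℝ, 0 ≤ t → (H t).PosDef) (hGpd : ∀ t : ℝ, 0 ≤ t → (G t).PosDef)
    (C : ℝ → Matrix (Fin n) (Fin n) ℝ) (hC : Continuous C)
    (φ W : ℝ → Matrix (Fin n) (Fin m) ℝ) (hφ : Continuous φ) (hWc : Continuous W)
    (K : Matrix (Fin n) (Fin n) ℝ) (hKsym : Kᵀ = K) (hKpd : K.PosDef)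
    (k : ℝ) (hk : 0 < k)
    (hkmin : IsLeast {μ : ℝ | Module.End.HasEigenvalue K.mulVecLin μ} k)
    (s s' : ℝ → EuclideanSpace ℝ (Fin n)) (atil atil' : ℝ → EuclideanSpace ℝ (Fin m))
    (hs : ∀ t : ℝ, 0 ≤ t → HasDerivAt s (s' t) t)
    (hatil : ∀ t : ℝ, 0 ≤ t → HasDerivAt atil (atil' t) t)
    (d d₁ : ℝ → EuclideanSpace ℝ (Fin n)) (a : EuclideanSpace ℝ (Fin m))
    (hdyn1 : ∀ t : ℝ, 0 ≤ t →
      mv (H t) (s' t) + mv (C t + K) (s t) - mv (φ t) (atil t) = d t)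
    (hdyn2 : ∀ t : ℝ, 0 ≤ t →
      mv (G t) (atil' t) + mv ((φ t)ᵀ) (s t)
          + mv ((W t)ᵀ * W t + (lam * gam) • (1 : Matrix (Fin m) (Fin m) ℝ)) (atil t)
        = -(mv ((W t)ᵀ) (d₁ t) + (lam * gam) • a))
    (hskew : ∀ t : ℝ, 0 ≤ t → (H' t - (2:ℝ) • C t)ᵀ = -(H' t - (2:ℝ) • C t))
    (hG' : ∀ t : ℝ, 0 ≤ t →
      G' t = (W t)ᵀ * W t - lam • G t + (lam * gam) • (1 : Matrix (Fin m) (Fin m) ℝ))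
    (m₁ m₂ : ℝ) (hm₁ : 0 < m₁) (hm₁₂ : m₁ ≤ m₂)
    (hHeig : ∀ t : ℝ, 0 ≤ t → ∀ μ : ℝ,
      Module.End.HasEigenvalue (H t).mulVecLin μ → μ ∈ Set.Icc m₁ m₂)
    (hGeig : ∀ t : ℝ, 0 ≤ t → ∀ μ : ℝ,
      Module.End.HasEigenvalue (G t).mulVecLin μ → μ ∈ Set.Icc m₁ m₂)
    (Dbar : ℝ)
    (hDbar : ∀ t : ℝ, 0 ≤ t →
      Real.sqrt (‖d t‖ ^ 2 + ‖mv ((W t)ᵀ) (d₁ t) + (lam * gam) • a‖ ^ 2) ≤ Dbar)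
    (lcon : ℝ) (hlcon : lcon = min k (lam / 2 * (m₁ + gam)) / m₂) :
    ∀ t : ℝ, 0 ≤ t →
      Real.sqrt (‖s t‖ ^ 2 + ‖atil t‖ ^ 2) ≤
        Real.sqrt (m₂ / m₁) * Real.sqrt (‖s 0‖ ^ 2 + ‖atil 0‖ ^ 2) * Real.exp (-lcon * t)
          + Dbar / (lcon * m₁) * (1 - Real.exp (-lcon * t)) := by
  have hm₂ : 0 < m₂ := lt_of_lt_of_le hm₁ hm₁₂
  have hlconpos : 0 < lcon := by
    rw [hlcon]
    exact div_pos (lt_min hk (by positivity)) hm₂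
  have hlk : lcon * m₂ ≤ k := by
    rw [hlcon, div_mul_cancel₀ _ (ne_of_gt hm₂)]
    exact min_le_left _ _
  have hlg : 2 * (lcon * m₂) ≤ lam * (m₁ + gam) := by
    rw [hlcon, div_mul_cancel₀ _ (ne_of_gt hm₂)]
    have := min_le_right k (lam / 2 * (m₁ + gam))
    linarith
  have hDbar0 : 0 ≤ Dbar := le_trans (Real.sqrt_nonneg _) (hDbar 0 le_rfl)
  have hsm₁ : 0 < Real.sqrt m₁ := Real.sqrt_pos.mpr hm₁
  have hm₁sq : Real.sqrt m₁ * Real.sqrt m₁ = m₁ := Real.mul_self_sqrt hm₁.le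
  set V : ℝ → ℝ := fun u => s u ⬝ᵥ (H u *ᵥ s u) + atil u ⬝ᵥ (G u *ᵥ atil u) with hVdef
  set DV : ℝ → ℝ := fun u =>
    (s' u ⬝ᵥ (H u *ᵥ s u) + s u ⬝ᵥ (H' u *ᵥ s u) + s u ⬝ᵥ (H u *ᵥ s' u))
      + (atil' u ⬝ᵥ (G u *ᵥ atil u) + atil u ⬝ᵥ (G' u *ᵥ atil u)
        + atil u ⬝ᵥ (G u *ᵥ atil' u)) with hDVdef
  have hVd : ∀ u : ℝ, 0 ≤ u → HasDerivAt V (DV u) u := fun u hu =>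
    (aux_qform_deriv (hHd u hu) (hs u hu)).add (aux_qform_deriv (hGd u hu) (hatil u hu))
  have hVlow : ∀ u : ℝ, 0 ≤ u →
      m₁ * (s u ⬝ᵥ s u + atil u ⬝ᵥ atil u) ≤ V u := by
    intro u hu
    have h1 := aux_qform_ge (H u) (hHsym u hu) m₁ (fun μ h => (hHeig u hu μ h).1) (s u)
    have h2 := aux_qform_ge (G u) (hGsym u hu) m₁ (fun μ h => (hGeig u hu μ h).1) (atil u)
    have : V u = s u ⬝ᵥ (H u *ᵥ s u) + atil u ⬝ᵥ (G u *ᵥ atil u) := rfl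
    rw [this, mul_add]
    exact add_le_add h1 h2
  have hVup : ∀ u : ℝ, 0 ≤ u →
      V u ≤ m₂ * (s u ⬝ᵥ s u + atil u ⬝ᵥ atil u) := by
    intro u hu
    have h1 := aux_qform_le (H u) (hHsym u hu) m₂ (fun μ h => (hHeig u hu μ h).2) (s u)
    have h2 := aux_qform_le (G u) (hGsym u hu) m₂ (fun μ h => (hGeig u hu μ h).2) (atil u)
    have : V u = s u ⬝ᵥ (H u *ᵥ s u) + atil u ⬝ᵥ (G u *ᵥ atil u) := rfl
    rw [this, mul_add]
    exact add_le_add h1 h2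
  have hV0 : ∀ u : ℝ, 0 ≤ u → 0 ≤ V u := fun u hu =>
    le_trans (mul_nonneg hm₁.le
      (add_nonneg (aux_dot_self_nonneg _) (aux_dot_self_nonneg _))) (hVlow u hu)
  -- the key differential inequality
  have hDVle : ∀ u : ℝ, 0 ≤ u →
      DV u ≤ -(2 * lcon) * V u + 2 * (Dbar / Real.sqrt m₁) * Real.sqrt (V u) := by
    intro u hu
    set e : EuclideanSpace ℝ (Fin m) := mv ((W u)ᵀ) (d₁ u) + (lam * gam) • a with he
    -- dynamics in scalar (dot-product) form
    have hsHs : s u ⬝ᵥ (H u *ᵥ s' u)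
        = s u ⬝ᵥ d u + s u ⬝ᵥ (φ u *ᵥ atil u)
          - (s u ⬝ᵥ (C u *ᵥ s u) + s u ⬝ᵥ (K *ᵥ s u)) := by
      have h := hdyn1 u hu
      simp only [mv, Matrix.add_mulVec] at h
      have h' : H u *ᵥ s' u + (C u *ᵥ s u + K *ᵥ s u) - φ u *ᵥ atil u = d u := congrArg WithLp.ofLp h
      have h2 := congrArg (fun z => s u ⬝ᵥ z) h'
      simp only [dotProduct_add, dotProduct_sub] at h2
      linarith
    have h2 : s' u ⬝ᵥ (H u *ᵥ s u) = s u ⬝ᵥ (H u *ᵥ s' u) := aux_dot_symm (hHsym u hu) _ _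
    have h3 : s u ⬝ᵥ (H' u *ᵥ s u) = 2 * (s u ⬝ᵥ (C u *ᵥ s u)) := by
      have h0 : s u ⬝ᵥ ((H' u - (2:ℝ) • C u) *ᵥ s u) = 0 := by
        have ha : s u ⬝ᵥ ((H' u - (2:ℝ) • C u)ᵀ *ᵥ s u)
            = s u ⬝ᵥ ((H' u - (2:ℝ) • C u) *ᵥ s u) := by
          rw [aux_dot_tr, dotProduct_comm]
        rw [hskew u hu, Matrix.neg_mulVec, dotProduct_neg] at ha
        linarith
      rw [Matrix.sub_mulVec, dotProduct_sub, Matrix.smul_mulVec,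
        dotProduct_smul, smul_eq_mul] at h0
      linarith
    have hphi : atil u ⬝ᵥ ((φ u)ᵀ *ᵥ s u) = s u ⬝ᵥ (φ u *ᵥ atil u) := by
      rw [aux_dot_tr, dotProduct_comm]
    have hWW : atil u ⬝ᵥ (((W u)ᵀ * W u) *ᵥ atil u)
        = (W u *ᵥ atil u) ⬝ᵥ (W u *ᵥ atil u) := by
      rw [← Matrix.mulVec_mulVec, aux_dot_tr]
    have hee : atil u ⬝ᵥ e
        = atil u ⬝ᵥ ((W u)ᵀ *ᵥ d₁ u) + lam * gam * (atil u ⬝ᵥ a) := by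
      have h' : atil u ⬝ᵥ e
          = atil u ⬝ᵥ ((W u)ᵀ *ᵥ d₁ u + (lam * gam) • (id a.ofLp : Fin m → ℝ)) := rfl
      rw [h', dotProduct_add, dotProduct_smul, smul_eq_mul, id_eq]
    have hGa : atil u ⬝ᵥ (G u *ᵥ atil' u)
        = -(atil u ⬝ᵥ e) - s u ⬝ᵥ (φ u *ᵥ atil u)
          - ((W u *ᵥ atil u) ⬝ᵥ (W u *ᵥ atil u) + lam * gam * (atil u ⬝ᵥ atil u)) := by
      have h := hdyn2 u hu
      simp only [mv, Matrix.add_mulVec, Matrix.smul_mulVec, Matrix.one_mulVec] at h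
      have h' : G u *ᵥ atil' u + (φ u)ᵀ *ᵥ s u + (((W u)ᵀ * W u) *ᵥ atil u
          + (lam * gam) • (id (atil u).ofLp : Fin m → ℝ))
          = -((W u)ᵀ *ᵥ d₁ u + (lam * gam) • (id a.ofLp : Fin m → ℝ)) := congrArg WithLp.ofLp h
      have h4 := congrArg (fun z => atil u ⬝ᵥ z) h'
      simp only [dotProduct_add, dotProduct_neg, dotProduct_smul,
        smul_eq_mul, id_eq] at h4
      rw [hphi, hWW] at h4
      rw [hee]
      linarith
    have h5 : atil' u ⬝ᵥ (G u *ᵥ atil u) = atil u ⬝ᵥ (G u *ᵥ atil' u) :=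
      aux_dot_symm (hGsym u hu) _ _
    have h6 : atil u ⬝ᵥ (G' u *ᵥ atil u)
        = (W u *ᵥ atil u) ⬝ᵥ (W u *ᵥ atil u) - lam * (atil u ⬝ᵥ (G u *ᵥ atil u))
          + lam * gam * (atil u ⬝ᵥ atil u) := by
      rw [hG' u hu, Matrix.add_mulVec, Matrix.sub_mulVec, Matrix.smul_mulVec,
        Matrix.smul_mulVec, Matrix.one_mulVec, dotProduct_add,
        dotProduct_sub, dotProduct_smul, dotProduct_smul,
        smul_eq_mul, smul_eq_mul, hWW]
    have heq : DV u = 2 * (s u ⬝ᵥ d u) - 2 * (atil u ⬝ᵥ e) - 2 * (s u ⬝ᵥ (K *ᵥ s u))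
        - (W u *ᵥ atil u) ⬝ᵥ (W u *ᵥ atil u) - lam * gam * (atil u ⬝ᵥ atil u)
        - lam * (atil u ⬝ᵥ (G u *ᵥ atil u)) := by
      have hDVu : DV u = (s' u ⬝ᵥ (H u *ᵥ s u) + s u ⬝ᵥ (H' u *ᵥ s u) + s u ⬝ᵥ (H u *ᵥ s' u))
          + (atil' u ⬝ᵥ (G u *ᵥ atil u) + atil u ⬝ᵥ (G' u *ᵥ atil u)
            + atil u ⬝ᵥ (G u *ᵥ atil' u)) := rfl
      rw [hDVu, h2, hsHs, h3, h5, hGa, h6]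
      ring
    -- quadratic form bounds
    have hK : k * (s u ⬝ᵥ s u) ≤ s u ⬝ᵥ (K *ᵥ s u) :=
      aux_qform_ge K hKsym k (fun μ h => hkmin.2 h) (s u)
    have hHup : s u ⬝ᵥ (H u *ᵥ s u) ≤ m₂ * (s u ⬝ᵥ s u) :=
      aux_qform_le (H u) (hHsym u hu) m₂ (fun μ h => (hHeig u hu μ h).2) (s u)
    have hGup : atil u ⬝ᵥ (G u *ᵥ atil u) ≤ m₂ * (atil u ⬝ᵥ atil u) :=
      aux_qform_le (G u) (hGsym u hu) m₂ (fun μ h => (hGeig u hu μ h).2) (atil u)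
    have hGlow : m₁ * (atil u ⬝ᵥ atil u) ≤ atil u ⬝ᵥ (G u *ᵥ atil u) :=
      aux_qform_ge (G u) (hGsym u hu) m₁ (fun μ h => (hGeig u hu μ h).1) (atil u)
    have hW0 : 0 ≤ (W u *ᵥ atil u) ⬝ᵥ (W u *ᵥ atil u) := aux_dot_self_nonneg _
    have hss : 0 ≤ s u ⬝ᵥ s u := aux_dot_self_nonneg _
    have haa : 0 ≤ atil u ⬝ᵥ atil u := aux_dot_self_nonneg _
    -- cross term bound
    have hcross : s u ⬝ᵥ d u - atil u ⬝ᵥ e ≤ Dbar / Real.sqrt m₁ * Real.sqrt (V u) := by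
      have c1 : s u ⬝ᵥ d u ≤ ‖s u‖ * ‖d u‖ := by
        rw [← aux_dot_eq_inner]
        exact real_inner_le_norm _ _
      have c2 : -(atil u ⬝ᵥ e) ≤ ‖atil u‖ * ‖e‖ := by
        rw [← aux_dot_eq_inner, ← inner_neg_right]
        calc (inner ℝ (atil u) (-e) : ℝ) ≤ ‖atil u‖ * ‖-e‖ := real_inner_le_norm _ _
          _ = ‖atil u‖ * ‖e‖ := by rw [norm_neg]
      have c3 : ‖s u‖ * ‖d u‖ + ‖atil u‖ * ‖e‖ ≤
          Real.sqrt (‖s u‖ ^ 2 + ‖atil u‖ ^ 2) * Real.sqrt (‖d u‖ ^ 2 + ‖e‖ ^ 2) :=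
        aux_cs2 (norm_nonneg _) (norm_nonneg _) (norm_nonneg _) (norm_nonneg _)
      have c4 : Real.sqrt (‖d u‖ ^ 2 + ‖e‖ ^ 2) ≤ Dbar := by
        have hd := hDbar u hu
        rw [← he] at hd
        exact hd
      have c5 : Real.sqrt (‖s u‖ ^ 2 + ‖atil u‖ ^ 2) ≤ Real.sqrt (V u) / Real.sqrt m₁ := by
        rw [aux_norm_sq_dot, aux_norm_sq_dot]
        have hle : s u ⬝ᵥ s u + atil u ⬝ᵥ atil u ≤ V u / m₁ := by
          rw [le_div_iff₀ hm₁]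
          linarith [hVlow u hu]
        calc Real.sqrt (s u ⬝ᵥ s u + atil u ⬝ᵥ atil u) ≤ Real.sqrt (V u / m₁) :=
              Real.sqrt_le_sqrt hle
          _ = Real.sqrt (V u) / Real.sqrt m₁ := Real.sqrt_div (hV0 u hu) m₁
      have c6 : Real.sqrt (‖s u‖ ^ 2 + ‖atil u‖ ^ 2) * Real.sqrt (‖d u‖ ^ 2 + ‖e‖ ^ 2)
          ≤ (Real.sqrt (V u) / Real.sqrt m₁) * Dbar :=
        mul_le_mul c5 c4 (Real.sqrt_nonneg _) (by positivity)
      have c7 : (Real.sqrt (V u) / Real.sqrt m₁) * Dbar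
          = Dbar / Real.sqrt m₁ * Real.sqrt (V u) := by ring
      linarith
    -- assemble
    have hVu : V u = s u ⬝ᵥ (H u *ᵥ s u) + atil u ⬝ᵥ (G u *ᵥ atil u) := rfl
    have b1 : lcon * (s u ⬝ᵥ (H u *ᵥ s u)) ≤ s u ⬝ᵥ (K *ᵥ s u) := by
      calc lcon * (s u ⬝ᵥ (H u *ᵥ s u)) ≤ lcon * (m₂ * (s u ⬝ᵥ s u)) :=
            mul_le_mul_of_nonneg_left hHup hlconpos.le
        _ = (lcon * m₂) * (s u ⬝ᵥ s u) := by ring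
        _ ≤ k * (s u ⬝ᵥ s u) := mul_le_mul_of_nonneg_right hlk hss
        _ ≤ _ := hK
    have b2 : 2 * lcon * (atil u ⬝ᵥ (G u *ᵥ atil u))
        ≤ lam * (atil u ⬝ᵥ (G u *ᵥ atil u)) + lam * gam * (atil u ⬝ᵥ atil u) := by
      have d1 : 2 * lcon * (atil u ⬝ᵥ (G u *ᵥ atil u)) ≤ 2 * lcon * (m₂ * (atil u ⬝ᵥ atil u)) :=
        mul_le_mul_of_nonneg_left hGup (by positivity)
      have d2 : (2 * (lcon * m₂)) * (atil u ⬝ᵥ atil u) ≤ (lam * (m₁ + gam)) * (atil u ⬝ᵥ atil u) :=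
        mul_le_mul_of_nonneg_right hlg haa
      have d3 : lam * m₁ * (atil u ⬝ᵥ atil u) ≤ lam * (atil u ⬝ᵥ (G u *ᵥ atil u)) := by
        calc lam * m₁ * (atil u ⬝ᵥ atil u) = lam * (m₁ * (atil u ⬝ᵥ atil u)) := by ring
          _ ≤ lam * (atil u ⬝ᵥ (G u *ᵥ atil u)) := mul_le_mul_of_nonneg_left hGlow hlam.le
      nlinarith [d1, d2, d3]
    have hVu2 : lcon * V u = lcon * (s u ⬝ᵥ (H u *ᵥ s u))
        + lcon * (atil u ⬝ᵥ (G u *ᵥ atil u)) := by rw [hVu]; ring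
    rw [heq]
    linarith [hcross, b1, b2, hW0, hVu2]
  -- Grönwall argument
  intro t ht
  have key : ∀ ε : ℝ, 0 < ε → Real.sqrt (V t) ≤
      (Real.sqrt (V 0) + ε) * Real.exp (-lcon * t)
        + (ε + Dbar / Real.sqrt m₁ / lcon) * (1 - Real.exp (-lcon * t)) := by
    intro ε hε
    have hVpos : ∀ u : ℝ, 0 ≤ u → 0 < V u + ε ^ 2 :=
      fun u hu => add_pos_of_nonneg_of_pos (hV0 u hu) (by positivity)
    have hfd : ∀ u : ℝ, 0 ≤ u →
        HasDerivAt (fun w => Real.sqrt (V w + ε ^ 2))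
          (DV u / (2 * Real.sqrt (V u + ε ^ 2))) u := fun u hu =>
      ((hVd u hu).add_const (ε ^ 2)).sqrt (ne_of_gt (hVpos u hu))
    have hcont : ContinuousOn (fun w => Real.sqrt (V w + ε ^ 2)) (Set.Icc 0 t) :=
      fun u hu => ((hfd u hu.1).continuousAt).continuousWithinAt
    have hslope : ∀ u ∈ Set.Ico 0 t, ∀ r,
        DV u / (2 * Real.sqrt (V u + ε ^ 2)) < r →
        ∃ᶠ z in nhdsWithin u (Set.Ioi u),
          (z - u)⁻¹ * (Real.sqrt (V z + ε ^ 2) - Real.sqrt (V u + ε ^ 2)) < r :=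
      fun u hu => aux_slope_freq (hfd u hu.1)
    have hf0 : Real.sqrt (V 0 + ε ^ 2) ≤ Real.sqrt (V 0) + ε := by
      have hsq : Real.sqrt (V 0) ^ 2 = V 0 := Real.sq_sqrt (hV0 0 le_rfl)
      have hle : V 0 + ε ^ 2 ≤ (Real.sqrt (V 0) + ε) ^ 2 := by
        nlinarith [Real.sqrt_nonneg (V 0), hε.le]
      calc Real.sqrt (V 0 + ε ^ 2) ≤ Real.sqrt ((Real.sqrt (V 0) + ε) ^ 2) :=
            Real.sqrt_le_sqrt hle
        _ = Real.sqrt (V 0) + ε := Real.sqrt_sq (by positivity)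
    have hbound : ∀ u ∈ Set.Ico 0 t, DV u / (2 * Real.sqrt (V u + ε ^ 2)) ≤
        (-lcon) * Real.sqrt (V u + ε ^ 2) + (lcon * ε + Dbar / Real.sqrt m₁) := by
      intro u hu
      have hg : 0 < Real.sqrt (V u + ε ^ 2) := Real.sqrt_pos.mpr (hVpos u hu.1)
      have hgsq : Real.sqrt (V u + ε ^ 2) ^ 2 = V u + ε ^ 2 := Real.sq_sqrt (hVpos u hu.1).le
      have hVle : Real.sqrt (V u) ≤ Real.sqrt (V u + ε ^ 2) :=
        Real.sqrt_le_sqrt (by nlinarith)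
      have hεle : ε ≤ Real.sqrt (V u + ε ^ 2) := by
        calc ε = Real.sqrt (ε ^ 2) := (Real.sqrt_sq hε.le).symm
          _ ≤ Real.sqrt (V u + ε ^ 2) := Real.sqrt_le_sqrt (by linarith [hV0 u hu.1])
      have hDV := hDVle u hu.1
      have hD' : 0 ≤ Dbar / Real.sqrt m₁ := by positivity
      rw [div_le_iff₀ (by positivity)]
      have e1 : lcon * ε * ε ≤ lcon * ε * Real.sqrt (V u + ε ^ 2) :=
        mul_le_mul_of_nonneg_left hεle (by positivity)
      have e2 : (Dbar / Real.sqrt m₁) * Real.sqrt (V u)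
          ≤ (Dbar / Real.sqrt m₁) * Real.sqrt (V u + ε ^ 2) :=
        mul_le_mul_of_nonneg_left hVle hD'
      have hgg : Real.sqrt (V u + ε ^ 2) * Real.sqrt (V u + ε ^ 2) = V u + ε ^ 2 :=
        Real.mul_self_sqrt (hVpos u hu.1).le
      have expand2 : ((-lcon) * Real.sqrt (V u + ε ^ 2) + (lcon * ε + Dbar / Real.sqrt m₁))
            * (2 * Real.sqrt (V u + ε ^ 2))
          = -(2 * lcon) * (V u) - 2 * (lcon * ε * ε) + 2 * (lcon * ε * Real.sqrt (V u + ε ^ 2))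
            + 2 * ((Dbar / Real.sqrt m₁) * Real.sqrt (V u + ε ^ 2))
            + 2 * lcon * ε * ε - 2 * lcon * ε ^ 2 := by
        linear_combination (-2 * lcon) * hgg
      rw [expand2]
      linarith [hDV, e1, e2]
    have hle := le_gronwallBound_of_liminf_deriv_right_le hcont hslope hf0 hbound t
      ⟨ht, le_rfl⟩
    rw [gronwallBound_of_K_ne_0 (neg_ne_zero.mpr (ne_of_gt hlconpos))] at hle
    have hVt : Real.sqrt (V t) ≤ Real.sqrt (V t + ε ^ 2) :=
      Real.sqrt_le_sqrt (by nlinarith)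
    have hrw : (Real.sqrt (V 0) + ε) * Real.exp (-lcon * (t - 0))
        + (lcon * ε + Dbar / Real.sqrt m₁) / (-lcon) * (Real.exp (-lcon * (t - 0)) - 1)
        = (Real.sqrt (V 0) + ε) * Real.exp (-lcon * t)
          + (ε + Dbar / Real.sqrt m₁ / lcon) * (1 - Real.exp (-lcon * t)) := by
      rw [sub_zero]
      field_simp
      ring
    calc Real.sqrt (V t) ≤ Real.sqrt (V t + ε ^ 2) := hVt
      _ ≤ _ := hle
      _ = _ := hrw
  -- conclude
  have hstep1 : Real.sqrt (‖s t‖ ^ 2 + ‖atil t‖ ^ 2) ≤ Real.sqrt (V t) / Real.sqrt m₁ := by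
    rw [aux_norm_sq_dot, aux_norm_sq_dot]
    have hle : s t ⬝ᵥ s t + atil t ⬝ᵥ atil t ≤ V t / m₁ := by
      rw [le_div_iff₀ hm₁]
      linarith [hVlow t ht]
    calc Real.sqrt (s t ⬝ᵥ s t + atil t ⬝ᵥ atil t) ≤ Real.sqrt (V t / m₁) :=
          Real.sqrt_le_sqrt hle
      _ = Real.sqrt (V t) / Real.sqrt m₁ := Real.sqrt_div (hV0 t ht) m₁
  have hV0up : Real.sqrt (V 0) ≤ Real.sqrt m₂ * Real.sqrt (‖s 0‖ ^ 2 + ‖atil 0‖ ^ 2) := by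
    rw [aux_norm_sq_dot, aux_norm_sq_dot, ← Real.sqrt_mul hm₂.le]
    exact Real.sqrt_le_sqrt (hVup 0 le_rfl)
  have hE0 : 0 < Real.exp (-lcon * t) := Real.exp_pos _
  have hE1 : Real.exp (-lcon * t) ≤ 1 :=
    Real.exp_le_one_iff.mpr (by nlinarith)
  refine le_of_forall_pos_le_add fun ε' hε' => ?_
  have hε : 0 < ε' * Real.sqrt m₁ := by positivity
  have hk2 := key (ε' * Real.sqrt m₁) hε
  have hDfix : Dbar / Real.sqrt m₁ / lcon / Real.sqrt m₁ = Dbar / (lcon * m₁) := by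
    rw [div_div, div_div]
    congr 1
    calc Real.sqrt m₁ * (lcon * Real.sqrt m₁) = lcon * (Real.sqrt m₁ * Real.sqrt m₁) := by ring
      _ = lcon * m₁ := by rw [hm₁sq]
  have hsqdiv : Real.sqrt (m₂ / m₁) = Real.sqrt m₂ / Real.sqrt m₁ := Real.sqrt_div hm₂.le m₁
  have expand : ((Real.sqrt (V 0) + ε' * Real.sqrt m₁) * Real.exp (-lcon * t)
        + (ε' * Real.sqrt m₁ + Dbar / Real.sqrt m₁ / lcon) * (1 - Real.exp (-lcon * t)))
        / Real.sqrt m₁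
      = (Real.sqrt (V 0) * Real.exp (-lcon * t)) / Real.sqrt m₁
        + Dbar / (lcon * m₁) * (1 - Real.exp (-lcon * t)) + ε' := by
    rw [← hDfix]
    field_simp
    ring
  have hlast : (Real.sqrt (V 0) * Real.exp (-lcon * t)) / Real.sqrt m₁
      ≤ Real.sqrt (m₂ / m₁) * Real.sqrt (‖s 0‖ ^ 2 + ‖atil 0‖ ^ 2) * Real.exp (-lcon * t) := by
    rw [hsqdiv, div_le_iff₀ hsm₁]
    calc Real.sqrt (V 0) * Real.exp (-lcon * t)
        ≤ (Real.sqrt m₂ * Real.sqrt (‖s 0‖ ^ 2 + ‖atil 0‖ ^ 2)) * Real.exp (-lcon * t) :=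
          mul_le_mul_of_nonneg_right hV0up hE0.le
      _ = Real.sqrt m₂ / Real.sqrt m₁ * Real.sqrt (‖s 0‖ ^ 2 + ‖atil 0‖ ^ 2)
            * Real.exp (-lcon * t) * Real.sqrt m₁ := by
          field_simp
  calc Real.sqrt (‖s t‖ ^ 2 + ‖atil t‖ ^ 2) ≤ Real.sqrt (V t) / Real.sqrt m₁ := hstep1
    _ ≤ ((Real.sqrt (V 0) + ε' * Real.sqrt m₁) * Real.exp (-lcon * t)
          + (ε' * Real.sqrt m₁ + Dbar / Real.sqrt m₁ / lcon) * (1 - Real.exp (-lcon * t)))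
          / Real.sqrt m₁ := by
        exact (div_le_div_iff_of_pos_right hsm₁).mpr hk2
    _ = (Real.sqrt (V 0) * Real.exp (-lcon * t)) / Real.sqrt m₁
          + Dbar / (lcon * m₁) * (1 - Real.exp (-lcon * t)) + ε' := expand
    _ ≤ _ := by linarith [hlast]
end
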